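/- In dimension one, for α ≥ -1/2 and 1 < p < ∞, the power weight W_r(x) = |x|^r belongs to the Muckenhoupt class A_p associated with the measure dw_α(x) = |x|^{2α+1} dx on ℝ if and only if -(2α+2) < r < (2α+2)(p-1). -/

import Mathlib

/-- The Muckenhoupt $A_p$ condition for the space $(ℝ, |x|^{2α+1}dx)$, $1<p<∞$,
written in the equivalent form avoiding divisions. -/
def IsApAlpha (α p : ℝ) (W : ℝ → ℝ) : Prop :=
  ∃ C : ℝ, ∀ a b : ℝ, a < b →
    (∫ x in a..b, W x * |x| ^ (2 * α + 1)) *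
      (∫ x in a..b, (W x) ^ (-1 / (p - 1)) * |x| ^ (2 * α + 1)) ^ (p - 1)
    ≤ C * (∫ x in a..b, |x| ^ (2 * α + 1)) ^ p

/-!
Write `s₀ = 2α + 1`. Since `(|x| ^ r) ^ (-1/(p-1)) = |x| ^ (-r/(p-1))`, the `A_p` inequality on
`[a, b]` only involves the integrals `I_s(a, b) = ∫_a^b |x| ^ s` for `s₁ = r + s₀`,
`s₂ = -r/(p-1) + s₀` and `s₀`, and the range of `r` in the theorem is exactly `-1 < s₁ ∧ -1 < s₂`.

For `s > -1` and `|a| ≤ b` one has `I_s(a, b) ≍ b ^ s (b - a)` uniformly; since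
`s₁ + (p - 1) s₂ = p s₀`, the powers of `b` and of `b - a` cancel, and the case
`|a| > b` is its mirror image under `x ↦ -x`. Conversely, on `[ε, 1]` the right-hand side stays
bounded while each factor on the left is at least its value on `[1/2, 1]`, so `I_{s₁}(ε, 1)` and
`I_{s₂}(ε, 1)` stay bounded as `ε → 0`: both `|x| ^ s₁` and `|x| ^ s₂` are integrable near `0`,
which forces `s₁, s₂ > -1`.
-/

open MeasureTheory Set Real Filter Topology

section AbsRpow

variable {s : ℝ}

lemma intervalIntegrable_abs_rpow (hs : -1 < s) (a b : ℝ) :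
    IntervalIntegrable (fun x : ℝ => |x| ^ s) volume a b := by
  have h₀ : ∀ c, 0 ≤ c → IntervalIntegrable (fun x : ℝ => |x| ^ s) volume 0 c := fun c hc =>
    (intervalIntegral.intervalIntegrable_rpow' hs).congr fun x hx => by
      rw [uIoc_of_le hc] at hx
      simp only [abs_of_pos hx.1]
  have h : ∀ c, IntervalIntegrable (fun x : ℝ => |x| ^ s) volume 0 c := by
    intro c
    rcases le_total 0 c with hc | hc
    · exact h₀ c hc
    · simpa using (IntervalIntegrable.iff_comp_neg).mp (h₀ (-c) (neg_nonneg.mpr hc))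
  exact (h a).symm.trans (h b)

lemma intervalIntegrable_abs_rpow_of_pos {a b : ℝ} (ha : 0 < a) (hab : a ≤ b) :
    IntervalIntegrable (fun x : ℝ => |x| ^ s) volume a b := by
  refine (continuous_abs.continuousOn.rpow_const fun x hx => Or.inl ?_).intervalIntegrable
  rw [uIcc_of_le hab] at hx
  exact abs_ne_zero.mpr (by linarith [hx.1])

lemma integral_abs_rpow_comp_neg (a b : ℝ) :
    ∫ x in -b..-a, |x| ^ s = ∫ x in a..b, |x| ^ s := by
  simp [← intervalIntegral.integral_comp_neg fun x : ℝ => |x| ^ s]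

lemma integral_abs_rpow_nonneg {a b : ℝ} (hab : a ≤ b) : 0 ≤ ∫ x in a..b, |x| ^ s :=
  intervalIntegral.integral_nonneg hab fun x _ => rpow_nonneg (abs_nonneg x) s

lemma integral_abs_rpow_mono_interval (hs : -1 < s) {a b c d : ℝ} (hca : c ≤ a) (hab : a ≤ b)
    (hbd : b ≤ d) : ∫ x in a..b, |x| ^ s ≤ ∫ x in c..d, |x| ^ s :=
  intervalIntegral.integral_mono_interval hca hab hbd
    (Eventually.of_forall fun x => rpow_nonneg (abs_nonneg x) s)
    (intervalIntegrable_abs_rpow hs c d)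

lemma integral_abs_rpow_zero_left (hs : -1 < s) {b : ℝ} (hb : 0 ≤ b) :
    ∫ x in (0 : ℝ)..b, |x| ^ s = b ^ (s + 1) / (s + 1) := by
  have h := integral_rpow (a := 0) (b := b) (Or.inl hs)
  rw [zero_rpow (by linarith : s + 1 ≠ 0), sub_zero] at h
  rw [← h]
  apply intervalIntegral.integral_congr
  intro x hx
  rw [uIcc_of_le hb] at hx
  simp only [abs_of_nonneg hx.1]

lemma integral_abs_rpow_neg_self (hs : -1 < s) {b : ℝ} (hb : 0 ≤ b) :
    ∫ x in -b..b, |x| ^ s = 2 * (b ^ (s + 1) / (s + 1)) := by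
  rw [← intervalIntegral.integral_add_adjacent_intervals (intervalIntegrable_abs_rpow hs _ 0)
    (intervalIntegrable_abs_rpow hs 0 _), ← neg_zero, integral_abs_rpow_comp_neg, neg_zero,
    integral_abs_rpow_zero_left hs hb, two_mul]

lemma abs_rpow_mem_Icc_of_mem_Icc_half {b x : ℝ} (hb : 0 < b) (hx : x ∈ Icc (b / 2) b) :
    |x| ^ s ∈ Icc (min 1 (2 ^ s)⁻¹ * b ^ s) (max 1 (2 ^ s)⁻¹ * b ^ s) := by
  have hx₀ : 0 < x := by linarith [hx.1]
  have half : (b / 2) ^ s = (2 ^ s)⁻¹ * b ^ s := by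
    rw [div_rpow hb.le zero_le_two, div_eq_inv_mul]
  rw [abs_of_pos hx₀]
  rcases le_total 0 s with hs | hs
  · constructor
    · calc min 1 (2 ^ s)⁻¹ * b ^ s ≤ (2 ^ s)⁻¹ * b ^ s := by gcongr; exact min_le_right _ _
        _ = (b / 2) ^ s := half.symm
        _ ≤ x ^ s := rpow_le_rpow (by linarith) hx.1 hs
    · calc x ^ s ≤ 1 * b ^ s := by rw [one_mul]; exact rpow_le_rpow hx₀.le hx.2 hs
        _ ≤ max 1 (2 ^ s)⁻¹ * b ^ s := by gcongr; exact le_max_left _ _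
  · constructor
    · calc min 1 (2 ^ s)⁻¹ * b ^ s ≤ 1 * b ^ s := by gcongr; exact min_le_left _ _
        _ = b ^ s := one_mul _
        _ ≤ x ^ s := rpow_le_rpow_of_nonpos hx₀ hx.2 hs
    · calc x ^ s ≤ (b / 2) ^ s := rpow_le_rpow_of_nonpos (by linarith) hx.1 hs
        _ = (2 ^ s)⁻¹ * b ^ s := half
        _ ≤ max 1 (2 ^ s)⁻¹ * b ^ s := by gcongr; exact le_max_right _ _

lemma integral_abs_rpow_mem_Icc_of_half_le {a b : ℝ} (hab : a < b) (ha : b / 2 ≤ a) :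
    ∫ x in a..b, |x| ^ s ∈
      Icc (min 1 (2 ^ s)⁻¹ * (b ^ s * (b - a))) (max 1 (2 ^ s)⁻¹ * (b ^ s * (b - a))) := by
  have hb : 0 < b := by linarith
  have hbound : ∀ x ∈ Icc a b, |x| ^ s ∈ Icc (min 1 (2 ^ s)⁻¹ * b ^ s) (max 1 (2 ^ s)⁻¹ * b ^ s) :=
    fun x hx => abs_rpow_mem_Icc_of_mem_Icc_half hb ⟨ha.trans hx.1, hx.2⟩
  have hint := intervalIntegrable_abs_rpow_of_pos (s := s) (by linarith) hab.le
  constructor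
  · calc min 1 (2 ^ s)⁻¹ * (b ^ s * (b - a)) = ∫ _ in a..b, min 1 (2 ^ s)⁻¹ * b ^ s := by
          simp only [intervalIntegral.integral_const, smul_eq_mul]; ring
      _ ≤ ∫ x in a..b, |x| ^ s := intervalIntegral.integral_mono_on hab.le
          intervalIntegrable_const hint fun x hx => (hbound x hx).1
  · calc ∫ x in a..b, |x| ^ s ≤ ∫ _ in a..b, max 1 (2 ^ s)⁻¹ * b ^ s :=
          intervalIntegral.integral_mono_on hab.le hint intervalIntegrable_const
            fun x hx => (hbound x hx).2
      _ = max 1 (2 ^ s)⁻¹ * (b ^ s * (b - a)) := by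
          simp only [intervalIntegral.integral_const, smul_eq_mul]; ring

lemma pos_of_abs_le_of_lt {a b : ℝ} (hab : a < b) (hab' : |a| ≤ b) : 0 < b := by
  linarith [neg_abs_le a]

lemma exists_integral_abs_rpow_le (hs : -1 < s) :
    ∃ C > 0, ∀ a b, a < b → |a| ≤ b → ∫ x in a..b, |x| ^ s ≤ C * (b ^ s * (b - a)) := by
  refine ⟨max (max 1 (2 ^ s)⁻¹) (4 / (s + 1)), lt_max_of_lt_left (lt_max_of_lt_left one_pos),
    fun a b hab hab' => ?_⟩
  have hb := pos_of_abs_le_of_lt hab hab'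
  have hbs : 0 ≤ b ^ s * (b - a) := mul_nonneg (rpow_nonneg hb.le s) (by linarith)
  rcases le_or_gt (b / 2) a with ha | ha
  · exact (integral_abs_rpow_mem_Icc_of_half_le hab ha).2.trans
      (mul_le_mul_of_nonneg_right (le_max_left _ _) hbs)
  · have hs₁ : 0 < s + 1 := by linarith
    calc ∫ x in a..b, |x| ^ s ≤ ∫ x in -b..b, |x| ^ s :=
          integral_abs_rpow_mono_interval hs (by linarith [neg_abs_le a]) hab.le le_rfl
      _ = 2 / (s + 1) * (b ^ s * b) := by
          rw [integral_abs_rpow_neg_self hs hb.le, rpow_add_one hb.ne']; ring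
      _ ≤ 2 / (s + 1) * (b ^ s * (2 * (b - a))) := by gcongr; linarith
      _ = 4 / (s + 1) * (b ^ s * (b - a)) := by ring
      _ ≤ _ := by gcongr; exact le_max_right _ _

lemma exists_pos_mul_le_integral_abs_rpow (hs : -1 < s) :
    ∃ c > 0, ∀ a b, a < b → |a| ≤ b → c * (b ^ s * (b - a)) ≤ ∫ x in a..b, |x| ^ s := by
  have hκ : 0 < min (1 : ℝ) (2 ^ s)⁻¹ := lt_min one_pos (inv_pos.mpr (rpow_pos_of_pos two_pos s))
  refine ⟨min 1 (2 ^ s)⁻¹ / 4, by positivity, fun a b hab hab' => ?_⟩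
  have hb := pos_of_abs_le_of_lt hab hab'
  have hbs : 0 < b ^ s := rpow_pos_of_pos hb s
  rcases le_or_gt (b / 2) a with ha | ha
  · calc min 1 (2 ^ s)⁻¹ / 4 * (b ^ s * (b - a)) ≤ min 1 (2 ^ s)⁻¹ * (b ^ s * (b - a)) := by
          have : 0 ≤ b ^ s * (b - a) := mul_nonneg hbs.le (by linarith)
          nlinarith
      _ ≤ _ := (integral_abs_rpow_mem_Icc_of_half_le hab ha).1
  · calc min 1 (2 ^ s)⁻¹ / 4 * (b ^ s * (b - a)) ≤ min 1 (2 ^ s)⁻¹ * (b ^ s * (b - b / 2)) := by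
          rw [div_mul_eq_mul_div, div_le_iff₀ four_pos, mul_assoc, mul_assoc]
          gcongr
          linarith [neg_abs_le a]
      _ ≤ ∫ x in b / 2..b, |x| ^ s := (integral_abs_rpow_mem_Icc_of_half_le (by linarith) le_rfl).1
      _ ≤ ∫ x in a..b, |x| ^ s := integral_abs_rpow_mono_interval hs ha.le (by linarith) le_rfl

lemma neg_one_lt_of_eventually_integral_abs_rpow_le {M : ℝ}
    (h : ∀ᶠ ε in 𝓝[>] 0, ∫ x in ε..1, |x| ^ s ≤ M) : -1 < s := by
  set u : ℕ → ℝ := fun n => 1 / ((n : ℝ) + 1)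
  have hu_pos : ∀ n, 0 < u n := fun n => by positivity
  have hu_le : ∀ n, u n ≤ 1 := fun n => div_le_one_of_le₀ (by simp) (by positivity)
  have hu : Tendsto u atTop (𝓝[>] 0) := tendsto_nhdsWithin_of_tendsto_nhds_of_eventually_within _
    tendsto_one_div_add_atTop_nhds_zero_nat (Eventually.of_forall hu_pos)
  have hint : IntegrableOn (fun x : ℝ => |x| ^ s) (Ioc 0 1) := by
    refine integrableOn_Ioc_of_intervalIntegral_norm_bounded (I := M) (fun n => ?_)
      (tendsto_nhds_of_tendsto_nhdsWithin hu) tendsto_const_nhds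
      ((hu.eventually h).mono fun n hn => ?_)
    · exact (intervalIntegrable_iff_integrableOn_Ioc_of_le (hu_le n)).mp
        (intervalIntegrable_abs_rpow_of_pos (hu_pos n) (hu_le n))
    · simpa [← intervalIntegral.integral_of_le (hu_le n),
        abs_of_nonneg (rpow_nonneg (abs_nonneg _) s)] using hn
  rw [← intervalIntegral.integrableOn_Ioo_rpow_iff one_pos]
  exact (hint.mono_set Ioo_subset_Ioc_self).congr_fun (fun x hx => by simp [abs_of_pos hx.1])
    measurableSet_Ioo

lemma exists_pos_eventually_le_integral_abs_rpow :
    ∃ c > 0, ∀ᶠ ε in 𝓝[>] 0, c ≤ ∫ x in ε..1, |x| ^ s := by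
  refine ⟨∫ x in (1 / 2 : ℝ)..1, |x| ^ s, ?_, ?_⟩
  · refine intervalIntegral.intervalIntegral_pos_of_pos_on
      (intervalIntegrable_abs_rpow_of_pos (by norm_num) (by norm_num)) (fun x hx => ?_)
      (by norm_num)
    exact rpow_pos_of_pos (abs_pos.mpr (by linarith [hx.1])) s
  · filter_upwards [Ioo_mem_nhdsGT (by norm_num : (0 : ℝ) < 1 / 2)] with ε hε
    exact intervalIntegral.integral_mono_interval hε.2.le (by norm_num) le_rfl
      (Eventually.of_forall fun x => rpow_nonneg (abs_nonneg x) s)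
      (intervalIntegrable_abs_rpow_of_pos hε.1 (by linarith [hε.2]))

lemma neg_one_lt_of_eventually_mul_rpow_le {t q K : ℝ} (hq : 0 < q)
    (h : ∀ᶠ ε in 𝓝[>] 0, (∫ x in ε..1, |x| ^ s) * (∫ x in ε..1, |x| ^ t) ^ q ≤ K) :
    -1 < s ∧ -1 < t := by
  obtain ⟨cs, hcs, hs⟩ := exists_pos_eventually_le_integral_abs_rpow (s := s)
  obtain ⟨ct, hct, ht⟩ := exists_pos_eventually_le_integral_abs_rpow (s := t)
  constructor
  · refine neg_one_lt_of_eventually_integral_abs_rpow_le (M := K / ct ^ q) ?_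
    filter_upwards [h, hs, ht] with ε hε hsε htε
    rw [le_div_iff₀ (rpow_pos_of_pos hct q)]
    exact (mul_le_mul_of_nonneg_left (rpow_le_rpow hct.le htε hq.le) (hcs.le.trans hsε)).trans hε
  · refine neg_one_lt_of_eventually_integral_abs_rpow_le (M := (K / cs) ^ q⁻¹) ?_
    filter_upwards [h, hs, ht] with ε hε hsε htε
    have htε₀ : 0 ≤ ∫ x in ε..1, |x| ^ t := hct.le.trans htε
    have hK : 0 ≤ K := (mul_nonneg (hcs.le.trans hsε) (rpow_nonneg htε₀ q)).trans hε
    rw [le_rpow_inv_iff_of_pos htε₀ (div_nonneg hK hcs.le) hq, le_div_iff₀ hcs, mul_comm]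
    exact (mul_le_mul_of_nonneg_right hsε (rpow_nonneg htε₀ q)).trans hε

end AbsRpow

lemma neg_one_lt_of_forall_integral_mul_rpow_le {s₀ s₁ s₂ p C : ℝ} (hs₀ : -1 < s₀) (hp : 1 < p)
    (hC : ∀ a b : ℝ, a < b →
      (∫ x in a..b, |x| ^ s₁) * (∫ x in a..b, |x| ^ s₂) ^ (p - 1) ≤
        C * (∫ x in a..b, |x| ^ s₀) ^ p) :
    -1 < s₁ ∧ -1 < s₂ := by
  refine neg_one_lt_of_eventually_mul_rpow_le (sub_pos.mpr hp)
    (K := max C 0 * (∫ x in (0 : ℝ)..1, |x| ^ s₀) ^ p) ?_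
  filter_upwards [Ioo_mem_nhdsGT one_pos] with ε hε
  have hI₀ := integral_abs_rpow_nonneg (s := s₀) hε.2.le
  calc _ ≤ C * (∫ x in ε..1, |x| ^ s₀) ^ p := hC ε 1 hε.2
    _ ≤ max C 0 * (∫ x in ε..1, |x| ^ s₀) ^ p := by gcongr; exact le_max_left _ _
    _ ≤ max C 0 * (∫ x in (0 : ℝ)..1, |x| ^ s₀) ^ p := by
        gcongr
        exact integral_abs_rpow_mono_interval hs₀ hε.1.le hε.2.le le_rfl

lemma rpow_mul_mul_rpow_mul_rpow_sub_one {b L s₀ s₁ s₂ p : ℝ} (hb : 0 < b) (hL : 0 < L)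
    (hs : s₁ + s₂ * (p - 1) = s₀ * p) :
    b ^ s₁ * L * (b ^ s₂ * L) ^ (p - 1) = (b ^ s₀ * L) ^ p := by
  rw [mul_rpow (rpow_nonneg hb.le _) hL.le, mul_rpow (rpow_nonneg hb.le _) hL.le,
    ← rpow_mul hb.le, ← rpow_mul hb.le, ← hs, rpow_add hb, rpow_sub_one hL.ne']
  field_simp

lemma exists_forall_integral_mul_rpow_le {s₀ s₁ s₂ p : ℝ} (hp : 1 ≤ p) (hs₀ : -1 < s₀)
    (hs₁ : -1 < s₁) (hs₂ : -1 < s₂) (hs : s₁ + s₂ * (p - 1) = s₀ * p) :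
    ∃ C, ∀ a b : ℝ, a < b →
      (∫ x in a..b, |x| ^ s₁) * (∫ x in a..b, |x| ^ s₂) ^ (p - 1) ≤
        C * (∫ x in a..b, |x| ^ s₀) ^ p := by
  obtain ⟨c₀, hc₀, h₀⟩ := exists_pos_mul_le_integral_abs_rpow hs₀
  obtain ⟨C₁, hC₁, h₁⟩ := exists_integral_abs_rpow_le hs₁
  obtain ⟨C₂, hC₂, h₂⟩ := exists_integral_abs_rpow_le hs₂
  refine ⟨C₁ * C₂ ^ (p - 1) / c₀ ^ p, fun a b hab => ?_⟩
  wlog hab' : |a| ≤ b generalizing a b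
  · have h : |-b| ≤ -a := by
      rw [abs_neg]
      rcases abs_cases a with ⟨ha, _⟩ | ⟨ha, _⟩ <;> exact abs_le.mpr ⟨by linarith, by linarith⟩
    simpa only [integral_abs_rpow_comp_neg, neg_neg] using this (-b) (-a) (by linarith) h
  have hb := pos_of_abs_le_of_lt hab hab'
  have hL : 0 < b - a := sub_pos.mpr hab
  have hp₁ : 0 ≤ p - 1 := sub_nonneg.mpr hp
  calc (∫ x in a..b, |x| ^ s₁) * (∫ x in a..b, |x| ^ s₂) ^ (p - 1)
      ≤ C₁ * (b ^ s₁ * (b - a)) * (C₂ * (b ^ s₂ * (b - a))) ^ (p - 1) := by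
        have hI₂ := integral_abs_rpow_nonneg (s := s₂) hab.le
        exact mul_le_mul (h₁ a b hab hab') (rpow_le_rpow hI₂ (h₂ a b hab hab') hp₁)
          (rpow_nonneg hI₂ _) (by positivity)
    _ = C₁ * C₂ ^ (p - 1) / c₀ ^ p * (c₀ * (b ^ s₀ * (b - a))) ^ p := by
        rw [mul_rpow hC₂.le (by positivity), mul_rpow hc₀.le (by positivity),
          ← rpow_mul_mul_rpow_mul_rpow_sub_one hb hL hs]
        field_simp
    _ ≤ C₁ * C₂ ^ (p - 1) / c₀ ^ p * (∫ x in a..b, |x| ^ s₀) ^ p := by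
        gcongr
        exact h₀ a b hab hab'

lemma integral_abs_rpow_mul_abs_rpow (u v a b : ℝ) :
    ∫ x in a..b, |x| ^ u * |x| ^ v = ∫ x in a..b, |x| ^ (u + v) :=
  intervalIntegral.integral_congr_ae <| (Measure.ae_ne volume 0).mono fun _ hx _ =>
    (rpow_add (abs_pos.mpr hx) u v).symm

lemma isApAlpha_abs_rpow_iff (α p r : ℝ) :
    IsApAlpha α p (fun x => |x| ^ r) ↔ ∃ C, ∀ a b : ℝ, a < b →
      (∫ x in a..b, |x| ^ (r + (2 * α + 1))) *
          (∫ x in a..b, |x| ^ (r * (-1 / (p - 1)) + (2 * α + 1))) ^ (p - 1) ≤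
        C * (∫ x in a..b, |x| ^ (2 * α + 1)) ^ p := by
  simp only [IsApAlpha, ← rpow_mul (abs_nonneg _), integral_abs_rpow_mul_abs_rpow]

theorem power_weight_Ap (α p r : ℝ) (hα : -1/2 ≤ α) (hp : 1 < p) :
    IsApAlpha α p (fun x => |x| ^ r) ↔ -(2 * α + 2) < r ∧ r < (2 * α + 2) * (p - 1) := by
  have hp₁ : 0 < p - 1 := sub_pos.mpr hp
  have hs₀ : -1 < 2 * α + 1 := by linarith
  have hs₁ : -(2 * α + 2) < r ↔ -1 < r + (2 * α + 1) := by constructor <;> intro <;> linarith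
  have hs₂ : r < (2 * α + 2) * (p - 1) ↔ -1 < r * (-1 / (p - 1)) + (2 * α + 1) := by
    rw [← div_lt_iff₀ hp₁, mul_div_assoc', mul_neg_one, neg_div]
    constructor <;> intro <;> linarith
  rw [isApAlpha_abs_rpow_iff, hs₁, hs₂]
  refine ⟨fun ⟨C, hC⟩ => neg_one_lt_of_forall_integral_mul_rpow_le hs₀ hp hC,
    fun ⟨h₁, h₂⟩ => exists_forall_integral_mul_rpow_le hp.le hs₀ h₁ h₂ ?_⟩
  field_simp
  ring
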